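/- Let (b,c) be a connected graph over X with a cocompact group action G, fix x₀ ∈ X, and let f₁, f₂ be strictly positive functions in the domain of H_{b,c} with f₁(x₀) = f₂(x₀) = 1, both G-multiplicative with the same character γ ∈ Hom(G, ℝ_{>0}). If f₁ is superharmonic and f₂ is subharmonic, then f₁ = f₂ and both are harmonic. -/

import Mathlib

open MeasureTheory
open scoped BigOperators

noncomputable section

namespace GraphPaper

variable {X : Type*}

/-- The Schrödinger operator `H_{b,c}` of a graph `(b,c)` over `X`. -/
def schrodinger (b : X → X → ℝ) (c : X → ℝ) (f : X → ℝ) : X → ℝ :=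
  fun x => (∑' y, b x y * (f x - f y)) + c x * f x

/-- Membership of `f` in the domain of `H_{b,c}`. -/
def InDom (b : X → X → ℝ) (f : X → ℝ) : Prop :=
  ∀ x, Summable fun y => b x y * |f y|

/-- The graph `b` is connected: any two points are joined by a path of positive weights. -/
def Connected (b : X → X → ℝ) : Prop :=
  ∀ x y : X, Relation.ReflTransGen (fun u v => 0 < b u v) x y

/-- The degree `deg(x) = ∑_y b(x,y) + c(x)`. -/
def deg (b : X → X → ℝ) (c : X → ℝ) (x : X) : ℝ :=
  (∑' y, b x y) + c x

variable {G : Type*} [Group G] [MulAction G X]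

/-- The shift `T_g f (x) = f (g⁻¹ x)`. -/
def shift (g : G) (f : X → ℝ) : X → ℝ := fun x => f (g⁻¹ • x)

/-- `H_{b,c}` is invariant under the shifts by elements of a set `R ⊆ G`. -/
def HInvOn (b : X → X → ℝ) (c : X → ℝ) (R : Set G) : Prop :=
  ∀ g ∈ R, ∀ f : X → ℝ, InDom b f →
    InDom b (shift g f) ∧ schrodinger b c (shift g f) = shift g (schrodinger b c f)

/-- The action of `G` on `X` is cocompact: there is a finite `V` with `G V = X`. -/
def CocompactAction (G X : Type*) [Group G] [MulAction G X] : Prop :=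
  ∃ V : Finset X, ∀ x : X, ∃ g : G, ∃ v ∈ V, x = g • v

/-- The set `𝓗⁺` of nonnegative, not identically zero, harmonic functions. -/
def Hplus (b : X → X → ℝ) (c : X → ℝ) : Set (X → ℝ) :=
  {f | InDom b f ∧ schrodinger b c f = 0 ∧ (∀ x, 0 ≤ f x) ∧ f ≠ 0}

/-- The set `𝓚`: the closure of the normalized positive harmonic functions. -/
def Kset (b : X → X → ℝ) (c : X → ℝ) (x₀ : X) : Set (X → ℝ) :=
  closure {f : X → ℝ | f ∈ Hplus b c ∧ f x₀ = 1}

/-- The set `𝓚^R` of `R`-invariant elements of `𝓚`. -/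
def KsetR (b : X → X → ℝ) (c : X → ℝ) (x₀ : X) (R : Set G) : Set (X → ℝ) :=
  {f ∈ Kset b c x₀ | ∀ g ∈ R, shift g f = f}

/-- `f` is `G`-multiplicative with a character `γ ∈ Hom(G, ℝ_{>0})`. -/
def IsMultiplicative (G : Type*) [Group G] [MulAction G X] (f : X → ℝ) : Prop :=
  ∃ γ : G →* ℝ, (∀ g, 0 < γ g) ∧ ∀ g : G, shift g f = γ g⁻¹ • f

/-- `Q(R) = π⁻¹(Z(G/R))`, the preimage of the centre of `G/R`. -/
def Qsub (R : Subgroup G) [R.Normal] : Subgroup G :=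
  (Subgroup.center (G ⧸ R)).comap (QuotientGroup.mk' R)

/-- The set `𝓜` of multiplicative elements of `𝓚`. -/
def Mset (G : Type*) [Group G] [MulAction G X] (b : X → X → ℝ) (c : X → ℝ) (x₀ : X) :
    Set (X → ℝ) :=
  {f ∈ Kset b c x₀ | IsMultiplicative G f}

/-- The set `𝓚_λ` for the graph `(b, c - λ)`, i.e. for `λ`-harmonic functions. -/
def KsetLam (b : X → X → ℝ) (c : X → ℝ) (x₀ : X) (l : ℝ) : Set (X → ℝ) :=
  closure {f : X → ℝ | InDom b f ∧ (schrodinger b c f = fun x => l * f x) ∧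
    (∀ x, 0 ≤ f x) ∧ f ≠ 0 ∧ f x₀ = 1}

/-- The set `𝓜_λ` of multiplicative elements of `𝓚_λ`. -/
def MsetLam (G : Type*) [Group G] [MulAction G X] (b : X → X → ℝ) (c : X → ℝ) (x₀ : X)
    (l : ℝ) : Set (X → ℝ) :=
  {f ∈ KsetLam b c x₀ l | IsMultiplicative G f}

/-! The quotient `f₂ / f₁` is `G`-invariant, since both functions have the same character, so by
cocompactness it attains its maximum `M`. Then `M f₁ - f₂` is nonnegative, superharmonic and
vanishes somewhere; by the strong minimum principle along paths of positive weight it vanishes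
identically, and the normalization at `x₀` forces `M = 1`. -/

section Domain

variable {b : X → X → ℝ} {f g : X → ℝ}

theorem InDom.summable_mul (hb0 : ∀ x y, 0 ≤ b x y) (hf : InDom b f) (x : X) :
    Summable fun y => b x y * f y :=
  Summable.of_abs <| (hf x).congr fun y => by rw [abs_mul, abs_of_nonneg (hb0 x y)]

theorem InDom.summable_mul_sub (hb0 : ∀ x y, 0 ≤ b x y) (hbs : ∀ x, Summable (b x))
    (hf : InDom b f) (x : X) : Summable fun y => b x y * (f x - f y) := by
  simpa only [mul_sub] using ((hbs x).mul_right _).sub (hf.summable_mul hb0 x)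

theorem InDom.smul (hf : InDom b f) (a : ℝ) : InDom b (a • f) := fun x =>
  ((hf x).mul_left |a|).congr fun y => by
    simp only [Pi.smul_apply, smul_eq_mul, abs_mul]; ring

theorem InDom.sub (hb0 : ∀ x y, 0 ≤ b x y) (hf : InDom b f) (hg : InDom b g) :
    InDom b (f - g) := fun x =>
  Summable.of_nonneg_of_le (fun y => mul_nonneg (hb0 x y) (abs_nonneg _))
    (fun y => by
      rw [← mul_add]
      exact mul_le_mul_of_nonneg_left (abs_sub _ _) (hb0 x y))
    ((hf x).add (hg x))

end Domain

section Schrodinger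

variable {b : X → X → ℝ} {c : X → ℝ} {f g : X → ℝ}

theorem schrodinger_smul (a : ℝ) (f : X → ℝ) :
    schrodinger b c (a • f) = a • schrodinger b c f := by
  funext x
  simp only [schrodinger, Pi.smul_apply, smul_eq_mul, mul_add, ← tsum_mul_left]
  congr 1
  · exact tsum_congr fun y => by ring
  · ring

theorem schrodinger_sub (hb0 : ∀ x y, 0 ≤ b x y) (hbs : ∀ x, Summable (b x))
    (hf : InDom b f) (hg : InDom b g) :
    schrodinger b c (f - g) = schrodinger b c f - schrodinger b c g := by
  funext x
  simp only [schrodinger, Pi.sub_apply]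
  rw [add_sub_add_comm, mul_sub,
    ← (hf.summable_mul_sub hb0 hbs x).tsum_sub (hg.summable_mul_sub hb0 hbs x)]
  exact congrArg (· + _) (tsum_congr fun y => by ring)

theorem eq_zero_of_adj_of_superharmonic_at (hb0 : ∀ x y, 0 ≤ b x y) {h : X → ℝ}
    (hh : InDom b h) (hnn : ∀ x, 0 ≤ h x) {x : X} (hx : h x = 0)
    (hsuper : 0 ≤ schrodinger b c h x) {y : X} (hxy : 0 < b x y) : h y = 0 := by
  have hterm_nonneg : ∀ z, 0 ≤ b x z * h z := fun z => mul_nonneg (hb0 x z) (hnn z)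
  -- at a zero of `h`, `H h x = -∑' z, b x z * h z`
  have htsum_nonpos : ∑' z, b x z * h z ≤ 0 := by
    simpa [schrodinger, hx, tsum_neg] using hsuper
  have hterm : b x y * h y = 0 :=
    le_antisymm (((hh.summable_mul hb0 x).le_tsum y fun z _ => hterm_nonneg z).trans
      htsum_nonpos) (hterm_nonneg y)
  exact (mul_eq_zero.mp hterm).resolve_left hxy.ne'

theorem eq_zero_of_superharmonic_of_nonneg (hb0 : ∀ x y, 0 ≤ b x y) (hconn : Connected b)
    {h : X → ℝ} (hh : InDom b h) (hnn : ∀ x, 0 ≤ h x)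
    (hsuper : ∀ x, 0 ≤ schrodinger b c h x) {v : X} (hv : h v = 0) : h = 0 := by
  funext y
  induction hconn v y with
  | refl => exact hv
  | tail _ hzw ih => exact eq_zero_of_adj_of_superharmonic_at hb0 hh hnn ih (hsuper _) hzw

theorem eq_smul_of_le_smul_of_eq (hb0 : ∀ x y, 0 ≤ b x y) (hbs : ∀ x, Summable (b x))
    (hconn : Connected b) (hf : InDom b f) (hg : InDom b g)
    (hsuper : ∀ x, 0 ≤ schrodinger b c f x) (hsub : ∀ x, schrodinger b c g x ≤ 0)
    {M : ℝ} (hM : 0 ≤ M) (hle : ∀ x, g x ≤ M * f x) {v : X} (hv : g v = M * f v) :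
    g = M • f := by
  have hzero : M • f - g = 0 := by
    refine eq_zero_of_superharmonic_of_nonneg (c := c) hb0 hconn ((hf.smul M).sub hb0 hg)
      (fun x => sub_nonneg.mpr (hle x)) (fun x => ?_) (sub_eq_zero.mpr hv.symm)
    rw [schrodinger_sub hb0 hbs (hf.smul M) hg, schrodinger_smul]
    exact sub_nonneg.mpr ((hsub x).trans (mul_nonneg hM (hsuper x)))
  exact (sub_eq_zero.mp hzero).symm

end Schrodinger

theorem CocompactAction.exists_forall_le_of_invariant [Nonempty X]
    (hG : CocompactAction G X) {α : Type*} [LinearOrder α] {φ : X → α}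
    (hφ : ∀ (g : G) x, φ (g • x) = φ x) : ∃ v, ∀ x, φ x ≤ φ v := by
  obtain ⟨V, hV⟩ := hG
  obtain ⟨-, v₀, hv₀, -⟩ := hV (Classical.arbitrary X)
  obtain ⟨v, -, hv⟩ := V.exists_max_image φ ⟨v₀, hv₀⟩
  refine ⟨v, fun x => ?_⟩
  obtain ⟨g, w, hw, rfl⟩ := hV x
  exact (hφ g w).trans_le (hv w hw)

theorem apply_smul_of_shift_eq {γ : G →* ℝ} {f : X → ℝ} (hf : ∀ g : G, shift g f = γ g⁻¹ • f)
    (g : G) (x : X) : f (g • x) = γ g * f x := by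
  simpa [shift] using congrFun (hf g⁻¹) x

theorem div_apply_smul_of_shift_eq {γ : G →* ℝ} {f₁ f₂ : X → ℝ}
    (hm₁ : ∀ g : G, shift g f₁ = γ g⁻¹ • f₁) (hm₂ : ∀ g : G, shift g f₂ = γ g⁻¹ • f₂)
    (g : G) (x : X) : f₂ (g • x) / f₁ (g • x) = f₂ x / f₁ x := by
  rw [apply_smul_of_shift_eq hm₁, apply_smul_of_shift_eq hm₂,
    mul_div_mul_left _ _ ((Group.isUnit g).map γ).ne_zero]

theorem superharmonic_eq_subharmonic_general {X : Type*} {G : Type*} [Group G]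
    [MulAction G X]
    (b : X → X → ℝ) (c : X → ℝ)
    (hb0 : ∀ x y, 0 ≤ b x y) (hbs : ∀ x, Summable (b x))
    (hconn : Connected b) (hcocpt : CocompactAction G X) (x₀ : X)
    (f₁ f₂ : X → ℝ) (hdom₁ : InDom b f₁) (hdom₂ : InDom b f₂)
    (hpos₁ : ∀ x, 0 < f₁ x)
    (hn₁ : f₁ x₀ = 1) (hn₂ : f₂ x₀ = 1)
    (γ : G →* ℝ)
    (hm₁ : ∀ g : G, shift g f₁ = γ g⁻¹ • f₁) (hm₂ : ∀ g : G, shift g f₂ = γ g⁻¹ • f₂)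
    (hsuper : ∀ x, 0 ≤ schrodinger b c f₁ x) (hsub : ∀ x, schrodinger b c f₂ x ≤ 0) :
    f₁ = f₂ ∧ schrodinger b c f₁ = 0 := by
  have : Nonempty X := ⟨x₀⟩
  obtain ⟨v, hv⟩ := hcocpt.exists_forall_le_of_invariant (φ := fun x => f₂ x / f₁ x)
    (div_apply_smul_of_shift_eq hm₁ hm₂)
  set M := f₂ v / f₁ v
  have hle : ∀ x, f₂ x ≤ M * f₁ x := fun x => (div_le_iff₀ (hpos₁ x)).mp (hv x)
  have hM : 1 ≤ M := by simpa [hn₁, hn₂] using hv x₀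
  have heq : f₂ = M • f₁ := eq_smul_of_le_smul_of_eq hb0 hbs hconn hdom₁ hdom₂ hsuper hsub
    (zero_le_one.trans hM) hle (div_mul_cancel₀ _ (hpos₁ v).ne').symm
  have hM1 : 1 = M := by simpa [hn₁, hn₂] using congrFun heq x₀
  have hf : f₁ = f₂ := by rw [heq, ← hM1, one_smul]
  exact ⟨hf, funext fun x => le_antisymm (hf ▸ hsub x) (hsuper x)⟩

/-- Two positive normalized multiplicative functions with the same
character, one superharmonic and one subharmonic, coincide and are harmonic. -/
theorem superharmonic_eq_subharmonic {X : Type*} [Countable X] {G : Type*} [Group G]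
    [MulAction G X]
    (b : X → X → ℝ) (c : X → ℝ)
    (hb0 : ∀ x y, 0 ≤ b x y) (hbd : ∀ x, b x x = 0) (hbs : ∀ x, Summable (b x))
    (hconn : Connected b) (hcocpt : CocompactAction G X) (x₀ : X)
    (f₁ f₂ : X → ℝ) (hdom₁ : InDom b f₁) (hdom₂ : InDom b f₂)
    (hpos₁ : ∀ x, 0 < f₁ x) (hpos₂ : ∀ x, 0 < f₂ x)
    (hn₁ : f₁ x₀ = 1) (hn₂ : f₂ x₀ = 1)
    (γ : G →* ℝ) (hγ : ∀ g, 0 < γ g)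
    (hm₁ : ∀ g : G, shift g f₁ = γ g⁻¹ • f₁) (hm₂ : ∀ g : G, shift g f₂ = γ g⁻¹ • f₂)
    (hsuper : ∀ x, 0 ≤ schrodinger b c f₁ x) (hsub : ∀ x, schrodinger b c f₂ x ≤ 0) :
    f₁ = f₂ ∧ schrodinger b c f₁ = 0 :=
  superharmonic_eq_subharmonic_general b c hb0 hbs hconn hcocpt x₀ f₁ f₂ hdom₁ hdom₂ hpos₁ hn₁ hn₂ γ
    hm₁ hm₂ hsuper hsub

end GraphPaper
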